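/- The t-product corresponds to slice-wise matrix multiplication in the Fourier domain: for tensors A ∈ ℂ^{n1×n2×n3} and B ∈ ℂ^{n2×n4×n3}, if C = A * B then for every k, C̄^{(k)} = Ā^{(k)} B̄^{(k)}, where X̄^{(k)} denotes the k-th frontal slice of the DFT of X along the third dimension. -/

import Mathlib

open Matrix Complex

/-- The t-th frontal slice of a complex third-order tensor. -/
def fSlice {n1 n2 n3 : ℕ} (A : Fin n1 → Fin n2 → Fin n3 → ℂ) (t : Fin n3) :
    Matrix (Fin n1) (Fin n2) ℂ :=
  fun i j => A i j t

/-- The t-product of complex third-order tensors: slice-wise circular convolution. -/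
noncomputable def tProd {n1 n2 n4 n3 : ℕ} (A : Fin n1 → Fin n2 → Fin n3 → ℂ)
    (B : Fin n2 → Fin n4 → Fin n3 → ℂ) : Fin n1 → Fin n4 → Fin n3 → ℂ :=
  fun i j k => ∑ t : Fin n3, (fSlice A (k - t) * fSlice B t) i j

/-- The k-th frontal slice of the DFT along the third dimension. -/
noncomputable def fourierSlice {n1 n2 n3 : ℕ} (A : Fin n1 → Fin n2 → Fin n3 → ℂ)
    (k : Fin n3) : Matrix (Fin n1) (Fin n2) ℂ :=
  fun i j => ∑ t : Fin n3,
    A i j t * Complex.exp (-2 * Real.pi * Complex.I / n3) ^ ((t : ℕ) * (k : ℕ))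

/-!
With `ω = exp (-2πi / n3)`, the DFT weight `t ↦ ω ^ (t * k)` is an additive character of
`Fin n3`, because `ω ^ n3 = 1`. Against any additive character `ψ`, the Fourier sum of a
circular convolution factors: substituting `u = s + t` turns `ψ u` into `ψ s * ψ t`. Since the
weights are scalars, this holds verbatim for matrix-valued convolutions such as the t-product.
-/

def Fin.powAddChar {M : Type*} [Monoid M] {n : ℕ} [NeZero n] {ζ : M} (hζ : ζ ^ n = 1) :
    AddChar (Fin n) M where
  toFun t := ζ ^ (t : ℕ)
  map_zero_eq_one' := pow_zero ζ
  map_add_eq_mul' s t := by rw [Fin.val_add, ← pow_eq_pow_mod _ hζ, pow_add]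

theorem Fin.powAddChar_apply {M : Type*} [Monoid M] {n : ℕ} [NeZero n] {ζ : M} (hζ : ζ ^ n = 1)
    (t : Fin n) : Fin.powAddChar hζ t = ζ ^ (t : ℕ) :=
  rfl

theorem AddChar.sum_smul_sum_mul_sub {G 𝕜 l m n : Type*} [AddGroup G] [Fintype G]
    [CommSemiring 𝕜] [Fintype m] (ψ : AddChar G 𝕜) (f : G → Matrix l m 𝕜)
    (g : G → Matrix m n 𝕜) :
    ∑ u, ψ u • ∑ t, f (u - t) * g t = (∑ s, ψ s • f s) * ∑ t, ψ t • g t := by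
  simp_rw [Finset.smul_sum, Matrix.sum_mul, Matrix.mul_sum, Matrix.smul_mul, Matrix.mul_smul,
    smul_smul]
  rw [Finset.sum_comm]
  conv_rhs => rw [Finset.sum_comm]
  refine Fintype.sum_congr _ _ fun t => ?_
  exact Fintype.sum_equiv (Equiv.subRight t) _ _ fun u => by
    rw [Equiv.subRight_apply, ← ψ.map_add_eq_mul, sub_add_cancel]

theorem Complex.exp_neg_two_pi_I_div_pow_pow_self (n m : ℕ) :
    (exp (-2 * Real.pi * I / n) ^ m) ^ n = 1 := by
  rcases eq_or_ne n 0 with rfl | hn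
  · exact pow_zero _
  have hroot : exp (-2 * Real.pi * I / n) ^ n = 1 := by
    rw [← exp_nat_mul, mul_div_cancel₀ _ (Nat.cast_ne_zero.mpr hn)]
    simpa using exp_int_mul_two_pi_mul_I (-1)
  rw [pow_right_comm, hroot, one_pow]

theorem fSlice_tProd {n1 n2 n4 n3 : ℕ} (A : Fin n1 → Fin n2 → Fin n3 → ℂ)
    (B : Fin n2 → Fin n4 → Fin n3 → ℂ) (u : Fin n3) :
    fSlice (tProd A B) u = ∑ t, fSlice A (u - t) * fSlice B t := by
  ext i j
  simp [fSlice, tProd, Matrix.sum_apply]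

theorem fourierSlice_eq_sum_smul {n1 n2 n3 : ℕ} [NeZero n3] (A : Fin n1 → Fin n2 → Fin n3 → ℂ)
    (k : Fin n3) :
    fourierSlice A k =
      ∑ t, Fin.powAddChar (exp_neg_two_pi_I_div_pow_pow_self n3 k) t • fSlice A t := by
  ext i j
  simp [fourierSlice, fSlice, Matrix.sum_apply, Fin.powAddChar_apply, ← pow_mul', mul_comm]

/-- The t-product becomes slice-wise matrix multiplication in the Fourier domain. -/
theorem fourierSlice_tProd {n1 n2 n4 n3 : ℕ}
    (A : Fin n1 → Fin n2 → Fin n3 → ℂ) (B : Fin n2 → Fin n4 → Fin n3 → ℂ)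
    (k : Fin n3) :
    fourierSlice (tProd A B) k = fourierSlice A k * fourierSlice B k := by
  have : NeZero n3 := ⟨k.pos.ne'⟩
  simp only [fourierSlice_eq_sum_smul, fSlice_tProd]
  exact AddChar.sum_smul_sum_mul_sub _ _ _
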